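/- arXiv:1706.03740 — 2 statements merged into one kernel-verified Lean document; each statement's English description precedes it below -/
import Mathlib

section
/- Genericity implies boundedness (binary case). For all α ∈ (0,1) and D ∈ ℕ there is θ₁ > 0 such that for all γ,γ' ∈ (0,θ₁) there exist κ₀ > 0 and n₀ such that the following holds for all n ≥ n₀ and κ ∈ (0,κ₀]. Let R ∈ ℝ^D with all R_d > 0, let 𝒱 = (v_i : i∈[n]) be an R-bounded, γ'-robustly (γ,R)-generic family of vectors in ℤ^D, and let w ∈ ℤ^D with |({0,1}ⁿ)^𝒱_w| ≥ (1+α)ⁿ. Then the maximum-entropy measure μ^𝒱_w is κ-bounded. -/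
/-!
The uniform measure on the fibre `{a | 𝒱(a) = w}` lies in `ℳ^𝒱_w`, so the maximum-entropy
product measure, with marginals `xᵢ = pᵢ(true)`, has entropy at least `n log₂(1+α)`. As a
binary entropy is at most one bit, a proportion `log₂(1+α)/2` of the coordinates satisfy
`δ < xᵢ < 1 - δ` for a suitable `δ`, and robust genericity yields among them `D` coordinates whose
vectors form a basis of determinant `≥ γ ∏ R_d`. By Cramer's rule every `vᵢ` is a combination of
this basis with coefficients at most `D!/γ`.

If some `xᵢ` were within `κ` of `0` or `1`, move it by `t` towards `1/2` and compensate on the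
basis coordinates so that `∑ xᵢ vᵢ` is unchanged. With `h` the binary entropy, the gain at `i` is
at least `h(t) - h(κ) ≥ t log(1/t) - h(κ)`, while `h` is Lipschitz on `[δ/2, 1 - δ/2]`, so the
basis coordinates lose only `O(t)`. For `t` and then `κ` small the total entropy increases,
contradicting maximality.
-/

open Finset

noncomputable section

/-- The `R`-scaled sup-norm `max_d |v d| / R d`. -/
noncomputable def rnorm {D : ℕ} (R : Fin D → ℝ) (v : Fin D → ℝ) : ℝ :=
  ⨆ d, |v d| / R d

/-- Evaluation of a family of vectors at a 0/1 vector. -/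
def bEval {n D : ℕ} (v : Fin n → Fin D → ℤ) (a : Fin n → Bool) (d : Fin D) : ℤ :=
  ∑ i, if a i then v i d else 0

/-- Product measure on `Jⁿ` from weights `p`. -/
def prodMeas {n : ℕ} {J : Type*} (p : Fin n → J → ℝ) (a : Fin n → J) : ℝ :=
  ∏ i, p i (a i)

/-- Entropy (base 2) of a finitely supported measure. -/
noncomputable def entropy {α : Type*} [Fintype α] (μ : α → ℝ) : ℝ :=
  -∑ x, μ x * Real.logb 2 (μ x)

/-- `μ ∈ ℳ^𝒱_w`: a probability measure on `{0,1}ⁿ` with `E_{a∼μ} 𝒱(a) = w`. -/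
def MemM {n D : ℕ} (v : Fin n → Fin D → ℤ) (w : Fin D → ℤ)
    (μ : (Fin n → Bool) → ℝ) : Prop :=
  (∀ x, 0 ≤ μ x) ∧ (∑ x, μ x = 1) ∧
    ∀ d, ∑ a : Fin n → Bool, μ a * (bEval v a d : ℝ) = (w d : ℝ)

/-- `v` is `γ'`-robustly `(γ,R)`-generic. -/
def RobustlyGeneric {n D : ℕ} (γ' γ : ℝ) (R : Fin D → ℝ) (v : Fin n → Fin D → ℤ) : Prop :=
  ∀ X : Finset (Fin n), γ' * n < (X.card : ℝ) →
    ∃ e : Fin D → Fin n, Function.Injective e ∧ (∀ d, e d ∈ X) ∧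
      γ * ∏ d, R d ≤ |(Matrix.of fun d d' : Fin D => ((v (e d) d' : ℝ))).det|

open Real

theorem binEntropy_le_binEntropy {x y : ℝ} (hx : 0 ≤ x) (hxy : x ≤ y) (hy : y ≤ 2⁻¹) :
    binEntropy x ≤ binEntropy y :=
  binEntropy_strictMonoOn.monotoneOn ⟨hx, hxy.trans hy⟩ ⟨hx.trans hxy, hy⟩ hxy

theorem mem_Ioo_of_binEntropy_lt {δ x : ℝ} (hδ : δ ≤ 2⁻¹) (hx : x ∈ Set.Icc 0 1)
    (h : binEntropy δ < binEntropy x) : x ∈ Set.Ioo δ (1 - δ) := by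
  by_contra hxδ
  rw [Set.mem_Ioo, not_and_or, not_lt, not_lt] at hxδ
  rcases hxδ with hxδ | hxδ
  · exact h.not_ge (binEntropy_le_binEntropy hx.1 hxδ hδ)
  · rw [← binEntropy_one_sub x] at h
    exact h.not_ge (binEntropy_le_binEntropy (by linarith [hx.2]) (by linarith) hδ)

theorem negMulLog_le_binEntropy {t : ℝ} (h₀ : 0 ≤ t) (h₁ : t ≤ 1) : negMulLog t ≤ binEntropy t := by
  rw [binEntropy_eq_negMulLog_add_negMulLog_one_sub]
  linarith [negMulLog_nonneg (sub_nonneg.2 h₁) (by linarith : 1 - t ≤ 1)]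

open Filter Topology in
theorem exists_pos_le_binEntropy_lt {ε b : ℝ} (hε : 0 < ε) (hb : 0 < b) :
    ∃ x, 0 < x ∧ x ≤ b ∧ binEntropy x < ε := by
  have hsmall : ∀ᶠ x in 𝓝[>] 0, binEntropy x < ε :=
    (binEntropy_continuous.tendsto' 0 0 binEntropy_zero).mono_left nhdsWithin_le_nhds
      |>.eventually (gt_mem_nhds hε)
  obtain ⟨x, ⟨hx₀, hxb⟩, hx⟩ := ((eventually_mem_set.2 (Ioc_mem_nhdsGT hb)).and hsmall).exists
  exact ⟨x, hx₀, hxb, hx⟩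

theorem abs_binEntropy_sub_le {m x y : ℝ} (hm : 0 < m) (hx : x ∈ Set.Icc m (1 - m))
    (hy : y ∈ Set.Icc m (1 - m)) : |binEntropy x - binEntropy y| ≤ -log m * |x - y| := by
  have hderiv : ∀ z ∈ Set.Icc m (1 - m), HasDerivWithinAt binEntropy
      (log (1 - z) - log z) (Set.Icc m (1 - m)) z := fun z hz =>
    (hasDerivAt_binEntropy (by linarith [hz.1]) (by linarith [hz.2])).hasDerivWithinAt
  have hbound : ∀ z ∈ Set.Icc m (1 - m), ‖log (1 - z) - log z‖ ≤ -log m := by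
    rintro z ⟨hz₁, hz₂⟩
    have : log m ≤ log z := log_le_log hm hz₁
    have : log z ≤ 0 := log_nonpos (by linarith) (by linarith)
    have : log m ≤ log (1 - z) := log_le_log hm (by linarith)
    have : log (1 - z) ≤ 0 := log_nonpos (by linarith) (by linarith)
    rw [Real.norm_eq_abs, abs_le]
    constructor <;> linarith
  simpa using (convex_Icc m (1 - m)).norm_image_sub_le_of_norm_hasDerivWithin_le hderiv hbound hy hx

theorem le_binEntropy_sub_of_abs_sub_le {δ r x y : ℝ} (hδ : 0 < δ) (hx : x ∈ Set.Icc δ (1 - δ))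
    (hxy : |y - x| ≤ r) (hr : r ≤ δ / 2) : log (δ / 2) * r ≤ binEntropy y - binEntropy x := by
  obtain ⟨hyx₁, hyx₂⟩ := abs_le.1 hxy
  have hL : 0 ≤ -log (δ / 2) := neg_nonneg.2 (log_nonpos (by positivity) (by linarith [hx.1, hx.2]))
  have := abs_binEntropy_sub_le (half_pos hδ) ⟨by linarith [hx.1], by linarith [hx.2]⟩
    ⟨by linarith [hx.1], by linarith [hx.2]⟩ |>.trans (mul_le_mul_of_nonneg_left hxy hL)
  linarith [(abs_le.1 this).1]

theorem binEntropy_sub_binEntropy_le_of_le {x κ t : ℝ} (hx : 0 ≤ x) (hxκ : x ≤ κ) (ht : 0 ≤ t)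
    (hκt : κ + t ≤ 2⁻¹) : binEntropy t - binEntropy κ ≤ binEntropy (x + t) - binEntropy x := by
  have := binEntropy_le_binEntropy ht (by linarith) (by linarith : x + t ≤ 2⁻¹)
  have := binEntropy_le_binEntropy hx hxκ (by linarith)
  linarith

theorem exists_abs_eq_binEntropy_sub_le {x κ t : ℝ} (hx : x ∈ Set.Icc 0 1)
    (hxκ : x ∉ Set.Icc κ (1 - κ)) (ht : 0 ≤ t) (hκt : κ + t ≤ 2⁻¹) :
    ∃ s, |s| = t ∧ x + s ∈ Set.Icc 0 1 ∧
      binEntropy t - binEntropy κ ≤ binEntropy (x + s) - binEntropy x := by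
  rw [Set.mem_Icc, not_and_or, not_le, not_le] at hxκ
  rcases hxκ with hxκ | hxκ
  · refine ⟨t, abs_of_nonneg ht, ⟨by linarith [hx.1], by linarith⟩, ?_⟩
    exact binEntropy_sub_binEntropy_le_of_le hx.1 hxκ.le ht hκt
  · refine ⟨-t, by simp [abs_of_nonneg ht], ⟨by linarith, by linarith [hx.2]⟩, ?_⟩
    have := binEntropy_sub_binEntropy_le_of_le (x := 1 - x) (by linarith [hx.2]) (by linarith)
      ht hκt
    rwa [← binEntropy_one_sub (x + -t), ← binEntropy_one_sub x,
      show 1 - (x + -t) = 1 - x + t by ring]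

theorem exists_perturbation_constants {δ : ℝ} (hδ : 0 < δ) (C K : ℝ) :
    ∃ κ > 0, ∃ t > 0, κ ≤ δ ∧ κ + t ≤ 2⁻¹ ∧ C * t ≤ δ / 2 ∧
      K * t + binEntropy κ < binEntropy t := by
  set t := min (min 4⁻¹ (δ / (2 * (|C| + 1)))) (exp (-(K + 1)))
  have ht : 0 < t := lt_min (lt_min (by norm_num) (by positivity)) (exp_pos _)
  have ht₄ : t ≤ 4⁻¹ := (min_le_left _ _).trans (min_le_left _ _)
  have hCt : C * t ≤ δ / 2 := by
    have : t * (2 * (|C| + 1)) ≤ δ :=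
      (le_div_iff₀ (by positivity)).1 ((min_le_left _ _).trans (min_le_right _ _))
    linarith [mul_le_mul_of_nonneg_right (le_abs_self C) ht.le]
  have hKt : K * t + t ≤ binEntropy t := by
    have hlog : log t ≤ -(K + 1) := (log_le_iff_le_exp ht).2 (min_le_right _ _)
    have := negMulLog_le_binEntropy ht.le (by linarith)
    rw [negMulLog] at this
    linarith [mul_le_mul_of_nonneg_left hlog ht.le]
  obtain ⟨κ, hκ, hκb, hκt⟩ :=
    exists_pos_le_binEntropy_lt ht (lt_min hδ (by norm_num : (0:ℝ) < 4⁻¹))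
  refine ⟨κ, hκ, t, ht, hκb.trans (min_le_left _ _), ?_, hCt, by linarith⟩
  linarith [hκb.trans (min_le_right _ _)]

theorem sum_le_mul_card_filter_lt_add {ι : Type*} (s : Finset ι) {f : ι → ℝ} {B ε : ℝ}
    (hfB : ∀ i ∈ s, f i ≤ B) (hε : 0 ≤ ε) : ∑ i ∈ s, f i ≤ B * #{i ∈ s | ε < f i} + ε * #s := by
  rw [← sum_filter_add_sum_filter_not s fun i => ε < f i]
  have hlarge := sum_le_card_nsmul {i ∈ s | ε < f i} f B fun i hi => hfB i (mem_filter.1 hi).1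
  have hsmall := sum_le_card_nsmul {i ∈ s | ¬ε < f i} f ε fun i hi => not_lt.1 (mem_filter.1 hi).2
  have hcard : (#{i ∈ s | ¬ε < f i} : ℝ) ≤ #s := by exact_mod_cast card_filter_le _ _
  rw [nsmul_eq_mul] at hlarge hsmall
  linarith [mul_le_mul_of_nonneg_left hcard hε]

theorem le_card_filter_binEntropy_lt {n : ℕ} {x : Fin n → ℝ} {β δ : ℝ} (hδ : δ ∈ Set.Icc 0 1)
    (hδβ : binEntropy δ ≤ β / 2 * log 2) (hsum : β * n ≤ (∑ i, binEntropy (x i)) / log 2) :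
    β / 2 * n ≤ #{i | binEntropy δ < binEntropy (x i)} := by
  have hlog : 0 < log 2 := log_pos one_lt_two
  have := sum_le_mul_card_filter_lt_add univ (fun i _ => binEntropy_le_log_two (p := x i))
    (binEntropy_nonneg hδ.1 hδ.2)
  rw [le_div_iff₀ hlog] at hsum
  rw [card_univ, Fintype.card_fin] at this
  refine le_of_mul_le_mul_right ?_ hlog
  linarith [mul_le_mul_of_nonneg_right hδβ (Nat.cast_nonneg' n)]

theorem Finset.sum_eq_add_sum_comp_of_eq_zero {ι κ M : Type*} [Fintype ι] [DecidableEq ι]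
    [Fintype κ] [AddCommMonoid M] {f : ι → M} {i : ι} {e : κ → ι} (he : e.Injective)
    (hei : ∀ k, e k ≠ i) (hf : ∀ j, j ≠ i → (∀ k, e k ≠ j) → f j = 0) :
    ∑ j, f j = f i + ∑ k, f (e k) := by
  have hi : i ∉ univ.map ⟨e, he⟩ := by simpa using hei
  rw [← sum_subset (subset_univ (insert i (univ.map ⟨e, he⟩))) fun j _ hj => ?_, sum_insert hi,
    sum_map]
  · rfl
  · simp only [mem_insert, mem_map, mem_univ, true_and, not_or, not_exists] at hj
    exact hf j hj.1 hj.2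

section Cramer

variable {ι : Type*} [Fintype ι] [DecidableEq ι]

theorem abs_det_le_factorial_mul_prod {A : Matrix ι ι ℝ} {R : ι → ℝ} (hA : ∀ i j, |A i j| ≤ R j) :
    |A.det| ≤ (Fintype.card ι).factorial * ∏ j, R j := by
  rw [Matrix.det_apply']
  calc |∑ σ : Equiv.Perm ι, (Equiv.Perm.sign σ : ℝ) * ∏ j, A (σ j) j|
      ≤ ∑ σ : Equiv.Perm ι, |(Equiv.Perm.sign σ : ℝ) * ∏ j, A (σ j) j| := abs_sum_le_sum_abs _ _
    _ ≤ ∑ _σ : Equiv.Perm ι, ∏ j, R j := by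
        refine sum_le_sum fun σ _ => ?_
        rw [abs_mul, ← Int.cast_abs, Equiv.Perm.sign_abs, Int.cast_one, one_mul, abs_prod]
        exact prod_le_prod (fun j _ => abs_nonneg _) fun j _ => hA _ _
    _ = (Fintype.card ι).factorial * ∏ j, R j := by
        rw [sum_const, card_univ, Fintype.card_perm, nsmul_eq_mul]

theorem exists_vecMul_eq_of_le_abs_det {M : Matrix ι ι ℝ} {R u : ι → ℝ} {γ : ℝ} (hγ : 0 < γ)
    (hR : ∀ j, 0 < R j) (hM : ∀ i j, |M i j| ≤ R j) (hu : ∀ j, |u j| ≤ R j)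
    (hdet : γ * ∏ j, R j ≤ |M.det|) :
    ∃ c, Matrix.vecMul c M = u ∧ ∀ i, |c i| ≤ (Fintype.card ι).factorial / γ := by
  have hR' : 0 < ∏ j, R j := prod_pos fun j _ => hR j
  have hdet₀ : M.det ≠ 0 := abs_pos.1 ((mul_pos hγ hR').trans_le hdet)
  refine ⟨(M.det)⁻¹ • M.transpose.cramer u, ?_, fun i => ?_⟩
  · rw [← Matrix.mulVec_transpose, Matrix.mulVec_smul, Matrix.mulVec_cramer, Matrix.det_transpose,
      smul_smul, inv_mul_cancel₀ hdet₀, one_smul]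
  · have hcr : |M.transpose.cramer u i| ≤ (Fintype.card ι).factorial * ∏ j, R j := by
      rw [Matrix.cramer_apply, Matrix.updateCol_transpose, Matrix.det_transpose]
      refine abs_det_le_factorial_mul_prod fun k j => ?_
      rw [Matrix.updateRow_apply]
      split_ifs
      exacts [hu j, hM k j]
    rw [Pi.smul_apply, smul_eq_mul, abs_mul, abs_inv, le_div_iff₀ hγ]
    calc |M.det|⁻¹ * |M.transpose.cramer u i| * γ
        ≤ (γ * ∏ j, R j)⁻¹ * ((Fintype.card ι).factorial * ∏ j, R j) * γ := by
          gcongr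
      _ = (Fintype.card ι).factorial := by field_simp

end Cramer

theorem abs_le_of_rnorm_le {D : ℕ} {R : Fin D → ℝ} (hR : ∀ d, 0 < R d) {u : Fin D → ℝ}
    (h : rnorm R u ≤ 1) (d : Fin D) : |u d| ≤ R d :=
  (div_le_one (hR d)).1 ((le_ciSup (Set.finite_range _).bddAbove d).trans h)

section ProductMeasure

variable {n : ℕ} {J : Type*} [Fintype J]

theorem sum_prodMeas_mul_apply (p : Fin n → J → ℝ) (hp : ∀ i, ∑ j, p i j = 1) (i₀ : Fin n)
    (φ : J → ℝ) : ∑ a, prodMeas p a * φ (a i₀) = ∑ j, p i₀ j * φ j := by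
  calc ∑ a, prodMeas p a * φ (a i₀)
      = ∑ a : Fin n → J, ∏ i, p i (a i) * (if i = i₀ then φ (a i) else 1) := by
        refine sum_congr rfl fun a _ => ?_
        rw [prod_mul_distrib, Fintype.prod_ite_eq', prodMeas]
    _ = ∏ i, ∑ j, p i j * (if i = i₀ then φ j else 1) :=
        (Fintype.prod_sum (κ := fun _ => J) fun i j => p i j * if i = i₀ then φ j else 1).symm
    _ = ∑ j, p i₀ j * φ j := by
        rw [prod_eq_single i₀ (fun i _ hi => by simp [hi, hp]) (by simp)]
        simp

theorem sum_prodMeas (p : Fin n → J → ℝ) (hp : ∀ i, ∑ j, p i j = 1) :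
    ∑ a, prodMeas p a = 1 := by
  simp [prodMeas, ← Fintype.prod_sum, hp]

theorem entropy_prodMeas (p : Fin n → J → ℝ) (hp : ∀ i, ∑ j, p i j = 1) :
    entropy (prodMeas p) = ∑ i, entropy (p i) := by
  have hlog : ∀ a, prodMeas p a * logb 2 (prodMeas p a)
      = ∑ i, prodMeas p a * logb 2 (p i (a i)) := by
    intro a
    by_cases h : prodMeas p a = 0
    · simp [h]
    · rw [prodMeas, logb_prod _ _ fun i _ hi => h (prod_eq_zero (mem_univ i) hi), mul_sum]
  simp only [entropy, hlog]
  rw [sum_comm, ← sum_neg_distrib]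
  exact sum_congr rfl fun i _ => by rw [sum_prodMeas_mul_apply p hp i fun j => logb 2 (p i j)]

theorem sum_prodMeas_mul_bEval {D : ℕ} (p : Fin n → Bool → ℝ) (hp : ∀ i, ∑ j, p i j = 1)
    (v : Fin n → Fin D → ℤ) (d : Fin D) :
    ∑ a, prodMeas p a * (bEval v a d : ℝ) = ∑ i, p i true * v i d := by
  simp only [bEval, Int.cast_sum, Int.cast_ite, Int.cast_zero, mul_sum]
  rw [sum_comm]
  refine sum_congr rfl fun i _ => ?_
  simpa using sum_prodMeas_mul_apply p hp i fun j => if j then (v i d : ℝ) else 0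

end ProductMeasure

section MaxEntropy

variable {n D : ℕ}

def bernoulliWeights (x : Fin n → ℝ) : Fin n → Bool → ℝ :=
  fun i b => if b then x i else 1 - x i

theorem sum_bernoulliWeights (x : Fin n → ℝ) (i : Fin n) : ∑ b, bernoulliWeights x i b = 1 := by
  simp [bernoulliWeights]

theorem bernoulliWeights_apply_true {p : Fin n → Bool → ℝ} (hp : ∀ i, ∑ j, p i j = 1) :
    bernoulliWeights (fun i => p i true) = p := by
  ext i b
  have := hp i
  cases b <;> simp [bernoulliWeights] at this ⊢; linarith

theorem bernoulliWeights_mem_Icc {x : Fin n → ℝ} {κ : ℝ} {i : Fin n}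
    (hx : x i ∈ Set.Icc κ (1 - κ)) (b : Bool) : bernoulliWeights x i b ∈ Set.Icc κ (1 - κ) := by
  cases b
  · exact ⟨by simp [bernoulliWeights]; linarith [hx.2], by simp [bernoulliWeights]; linarith [hx.1]⟩
  · exact hx

theorem entropy_prodMeas_bernoulliWeights (x : Fin n → ℝ) :
    entropy (prodMeas (bernoulliWeights x)) = (∑ i, binEntropy (x i)) / log 2 := by
  rw [entropy_prodMeas _ (sum_bernoulliWeights x), sum_div]
  refine sum_congr rfl fun i _ => ?_
  simp only [entropy, bernoulliWeights, Fintype.sum_bool, negMulLog, logb, if_true,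
    binEntropy_eq_negMulLog_add_negMulLog_one_sub, Bool.false_eq_true, if_false]
  ring

theorem memM_prodMeas_bernoulliWeights {v : Fin n → Fin D → ℤ} {w : Fin D → ℤ} {x : Fin n → ℝ}
    (hx : ∀ i, x i ∈ Set.Icc 0 1) (hxw : ∀ d, ∑ i, x i * v i d = w d) :
    MemM v w (prodMeas (bernoulliWeights x)) := by
  refine ⟨fun a => prod_nonneg fun i _ => ?_, sum_prodMeas _ (sum_bernoulliWeights x), fun d => ?_⟩
  · cases a i <;> simp [bernoulliWeights, (hx i).1, (hx i).2]
  · rw [sum_prodMeas_mul_bEval _ (sum_bernoulliWeights x), ← hxw d]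
    simp [bernoulliWeights]

theorem logb_le_of_le_ncard {v : Fin n → Fin D → ℤ} {w : Fin D → ℤ} {b E : ℝ} (hb : 0 < b)
    (hbw : b ≤ {a | ∀ d, bEval v a d = w d}.ncard) (hE : ∀ μ, MemM v w μ → entropy μ ≤ E) :
    logb 2 b ≤ E := by
  classical
  set S : Finset (Fin n → Bool) := {a | ∀ d, bEval v a d = w d}
  have hS : {a | ∀ d, bEval v a d = w d} = (S : Set (Fin n → Bool)) := by ext; simp [S]
  rw [hS, Set.ncard_coe_finset] at hbw
  have hS0 : (#S : ℝ) ≠ 0 := (hb.trans_le hbw).ne'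
  let μ : (Fin n → Bool) → ℝ := fun a => if a ∈ S then (#S : ℝ)⁻¹ else 0
  have hμ : MemM v w μ := by
    refine ⟨fun a => by positivity, ?_, fun d => ?_⟩
    · simp [μ, sum_ite_mem, hS0]
    · simp only [μ, ite_mul, zero_mul, sum_ite_mem, univ_inter]
      rw [sum_congr rfl fun a ha => by rw [(mem_filter.1 ha).2 d]]
      simp [hS0]
  calc logb 2 b ≤ logb 2 #S := logb_le_logb_of_le one_lt_two hb hbw
    _ = entropy μ := by
        have hμlog : ∀ a, μ a * logb 2 (μ a)
            = if a ∈ S then (#S : ℝ)⁻¹ * logb 2 (#S : ℝ)⁻¹ else 0 := fun a => by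
          by_cases ha : a ∈ S <;> simp [μ, ha]
        simp only [entropy, hμlog, sum_ite_mem, univ_inter, sum_const, nsmul_eq_mul, logb_inv]
        field_simp
    _ ≤ E := hE μ hμ

def IsMaxBinEntropy (v : Fin n → Fin D → ℤ) (x : Fin n → ℝ) : Prop :=
  ∀ y : Fin n → ℝ, (∀ i, y i ∈ Set.Icc 0 1) →
    (∀ d, ∑ i, y i * v i d = ∑ i, x i * v i d) → ∑ i, binEntropy (y i) ≤ ∑ i, binEntropy (x i)

theorem isMaxBinEntropy_of_forall_entropy_le {v : Fin n → Fin D → ℤ} {w : Fin D → ℤ}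
    {p : Fin n → Bool → ℝ} (hp : ∀ i, ∑ j, p i j = 1) (hpM : MemM v w (prodMeas p))
    (hmax : ∀ μ, MemM v w μ → entropy μ ≤ entropy (prodMeas p)) :
    IsMaxBinEntropy v fun i => p i true := by
  intro y hy hyx
  have hpw : ∀ d, ∑ i, p i true * v i d = w d := fun d => by
    rw [← sum_prodMeas_mul_bEval p hp, hpM.2.2 d]
  have := hmax _ (memM_prodMeas_bernoulliWeights hy fun d => (hyx d).trans (hpw d))
  rwa [← bernoulliWeights_apply_true hp, entropy_prodMeas_bernoulliWeights,
    entropy_prodMeas_bernoulliWeights, div_le_div_iff_of_pos_right (log_pos one_lt_two)] at this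

def exchangeDirection (i : Fin n) (e : Fin D → Fin n) (c : Fin D → ℝ) : Fin n → ℝ :=
  Pi.single i 1 - ∑ d, Pi.single (e d) (c d)

variable {i : Fin n} {e : Fin D → Fin n} {c : Fin D → ℝ}

theorem exchangeDirection_self (hei : ∀ d, e d ≠ i) : exchangeDirection i e c i = 1 := by
  simp [exchangeDirection, Ne.symm (hei _)]

theorem exchangeDirection_apply_comp (he : e.Injective) (hei : ∀ d, e d ≠ i) (d : Fin D) :
    exchangeDirection i e c (e d) = -c d := by
  simp [exchangeDirection, Pi.single_apply, hei d, he.eq_iff]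

theorem exchangeDirection_eq_zero {j : Fin n} (hji : j ≠ i) (hje : ∀ d, e d ≠ j) :
    exchangeDirection i e c j = 0 := by
  simp [exchangeDirection, hji, fun d => Ne.symm (hje d)]

theorem sum_exchangeDirection_mul (f : Fin n → ℝ) :
    ∑ j, exchangeDirection i e c j * f j = f i - ∑ d, c d * f (e d) := by
  simp only [exchangeDirection, Pi.sub_apply, Finset.sum_apply, sub_mul, sum_sub_distrib, sum_mul]
  rw [sum_comm]
  simp [Pi.single_apply]

theorem IsMaxBinEntropy.mem_Icc {v : Fin n → Fin D → ℤ} {x : Fin n → ℝ}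
    (hmax : IsMaxBinEntropy v x) (hx : ∀ j, x j ∈ Set.Icc 0 1) {δ C κ t : ℝ} (hδ : 0 < δ)
    (hκδ : κ ≤ δ) (ht : 0 ≤ t) (hκt : κ + t ≤ 2⁻¹) (hCt : C * t ≤ δ / 2)
    (hgain : D * -log (δ / 2) * C * t + binEntropy κ < binEntropy t)
    (he : e.Injective) (hxe : ∀ d, x (e d) ∈ Set.Icc δ (1 - δ)) (hc : ∀ d, |c d| ≤ C)
    (hvc : Matrix.vecMul c (Matrix.of fun d d' => (v (e d) d' : ℝ)) = fun d' => (v i d' : ℝ)) :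
    x i ∈ Set.Icc κ (1 - κ) := by
  by_contra hxi
  have hei : ∀ d, e d ≠ i := fun d hd =>
    hxi (hd ▸ ⟨hκδ.trans (hxe d).1, (hxe d).2.trans (by linarith)⟩)
  obtain ⟨s, hs, hxs, hgain_i⟩ := exists_abs_eq_binEntropy_sub_le (hx i) hxi ht hκt
  set y := x + s • exchangeDirection i e c
  have hyi : y i = x i + s := by simp [y, exchangeDirection_self hei]
  have hye : ∀ d, |y (e d) - x (e d)| ≤ C * t := fun d => by
    simp only [y, Pi.add_apply, Pi.smul_apply, smul_eq_mul, exchangeDirection_apply_comp he hei,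
      add_sub_cancel_left, abs_mul, abs_neg, hs]
    exact mul_comm C t ▸ mul_le_mul_of_nonneg_left (hc d) ht
  have hy : ∀ j, y j ∈ Set.Icc 0 1 := fun j => by
    by_cases hji : j = i
    · exact hji ▸ hyi ▸ hxs
    by_cases hje : ∃ d, e d = j
    · obtain ⟨d, rfl⟩ := hje
      have := abs_le.1 (hye d)
      exact ⟨by linarith [(hxe d).1], by linarith [(hxe d).2]⟩
    · simpa [y, exchangeDirection_eq_zero hji (not_exists.1 hje)] using hx j
  have hyv : ∀ d', ∑ j, y j * v j d' = ∑ j, x j * v j d' := fun d' => by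
    have hker := sum_exchangeDirection_mul (i := i) (e := e) (c := c) fun j => (v j d' : ℝ)
    have hcomb : ∑ d, c d * v (e d) d' = v i d' := congrFun hvc d'
    simp only [y, Pi.add_apply, Pi.smul_apply, smul_eq_mul, add_mul, sum_add_distrib, mul_assoc,
      ← mul_sum, hker, hcomb, sub_self, mul_zero, add_zero]
  have hsplit : ∑ j, (binEntropy (y j) - binEntropy (x j))
      = binEntropy (y i) - binEntropy (x i)
        + ∑ d, (binEntropy (y (e d)) - binEntropy (x (e d))) :=
    sum_eq_add_sum_comp_of_eq_zero he hei fun j hji hje => by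
      simp [y, exchangeDirection_eq_zero hji hje]
  have hloss := sum_le_sum fun d (_ : d ∈ univ) =>
    le_binEntropy_sub_of_abs_sub_le hδ (hxe d) (hye d) hCt
  have := hmax y hy hyv
  rw [sum_const, card_univ, Fintype.card_fin, nsmul_eq_mul] at hloss
  rw [sum_sub_distrib, hyi] at hsplit
  linarith

end MaxEntropy

/-- **Genericity implies boundedness (binary case).** -/
theorem genericity_implies_boundedness
    (α : ℝ) (hα : α ∈ Set.Ioo (0:ℝ) 1) (D : ℕ) :
    ∃ θ₁ > (0:ℝ), ∀ γ ∈ Set.Ioo (0:ℝ) θ₁, ∀ γ' ∈ Set.Ioo (0:ℝ) θ₁,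
    ∃ κ₀ > (0:ℝ), ∃ n₀ : ℕ, ∀ n, n₀ ≤ n → ∀ κ ∈ Set.Ioc (0:ℝ) κ₀,
    ∀ R : Fin D → ℝ, (∀ d, 0 < R d) →
    ∀ v : Fin n → Fin D → ℤ,
      (∀ i, rnorm R (fun d => (v i d : ℝ)) ≤ 1) →
      RobustlyGeneric γ' γ R v →
    ∀ w : Fin D → ℤ,
      (1 + α) ^ n ≤ (({a : Fin n → Bool | ∀ d, bEval v a d = w d}.ncard : ℝ)) →
    ∀ p : Fin n → Bool → ℝ,
      (∀ i j, 0 ≤ p i j) → (∀ i, ∑ j, p i j = 1) →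
      MemM v w (prodMeas p) →
      (∀ μ, MemM v w μ → entropy μ ≤ entropy (prodMeas p)) →
    ∀ i j, p i j ∈ Set.Icc κ (1 - κ) := by
  set β := logb 2 (1 + α)
  have hβ : 0 < β := logb_pos one_lt_two (by linarith [hα.1])
  refine ⟨β / 4, by positivity, fun γ ⟨hγ, _⟩ γ' ⟨_, hγ'⟩ => ?_⟩
  obtain ⟨δ, hδ, hδ₂, hδβ⟩ := exists_pos_le_binEntropy_lt (by positivity : 0 < β / 2 * log 2)
    (by norm_num : (0:ℝ) < 2⁻¹)
  -- `D!/γ` bounds the Cramer coefficients, `-log (δ/2)` is the Lipschitz constant of `binEntropy`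
  -- on `[δ/2, 1 - δ/2]`
  obtain ⟨κ₀, hκ₀, t, ht, hκ₀δ, hκ₀t, hCt, hgain⟩ :=
    exists_perturbation_constants hδ (D.factorial / γ) (D * -log (δ / 2) * (D.factorial / γ))
  refine ⟨κ₀, hκ₀, 1, fun n hn κ ⟨_, hκ⟩ R hR v hv hgen w hw p hp0 hp1 hpM hmax => ?_⟩
  set x := fun i => p i true
  have hx : ∀ i, x i ∈ Set.Icc 0 1 := fun i =>
    ⟨hp0 i true, by linarith [hp0 i false, Fintype.sum_bool (p i) ▸ hp1 i]⟩
  have hlow : β * n ≤ (∑ i, binEntropy (x i)) / log 2 := by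
    rw [← entropy_prodMeas_bernoulliWeights, bernoulliWeights_apply_true hp1, mul_comm, ← logb_pow]
    exact logb_le_of_le_ncard (pow_pos (by linarith [hα.1]) n) hw hmax
  have hG : γ' * n < #{i | binEntropy δ < binEntropy (x i)} := by
    have hn' : (0:ℝ) < n := by exact_mod_cast hn
    have := le_card_filter_binEntropy_lt ⟨hδ.le, by linarith⟩ hδβ.le hlow
    linarith [mul_lt_mul_of_pos_right hγ' hn', mul_pos hβ hn']
  obtain ⟨e, he, heG, hdet⟩ := hgen _ hG
  have hxe : ∀ d, x (e d) ∈ Set.Icc δ (1 - δ) := fun d =>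
    Set.Ioo_subset_Icc_self (mem_Ioo_of_binEntropy_lt hδ₂ (hx _) (mem_filter.1 (heG d)).2)
  have hxκ₀ : ∀ i, x i ∈ Set.Icc κ₀ (1 - κ₀) := fun i => by
    obtain ⟨c, hvc, hc⟩ := exists_vecMul_eq_of_le_abs_det hγ hR
      (fun d => abs_le_of_rnorm_le hR (hv (e d))) (abs_le_of_rnorm_le hR (hv i)) hdet
    rw [Fintype.card_fin] at hc
    exact (isMaxBinEntropy_of_forall_entropy_le hp1 hpM hmax).mem_Icc hx hδ hκ₀δ ht.le hκ₀t hCt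
      hgain he hxe hc hvc
  intro i j
  rw [← bernoulliWeights_apply_true hp1]
  exact bernoulliWeights_mem_Icc (Set.Icc_subset_Icc hκ (by linarith) (hxκ₀ i)) j
end
end

section
/- Independence number of a product of two graphs. For all ε,c ∈ (0,1) there is δ₀ > 0 such that for all δ ∈ (0,δ₀] there is N₀ such that the following holds for all N ≥ N₀. Let N₁,N₂ ∈ ℕ with N ≤ N₁^c ≤ N₂ ≤ N₁^{1/c}, and for i = 1,2 let G_i be a graph on vertex set V_i with |V_i| = N_i and α(G_i) ≤ N_i^{1−ε}. Then α(G₁ × G₂) ≤ (N₁N₂)^{1−δ}. -/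
open Finset

noncomputable section

/-- The tensor (categorical) product of two graphs: `(u₁,u₂) ~ (v₁,v₂)` iff
`u₁ ~ v₁` and `u₂ ~ v₂`. -/
def graphProd {V₁ V₂ : Type*} (G₁ : SimpleGraph V₁) (G₂ : SimpleGraph V₂) :
    SimpleGraph (V₁ × V₂) where
  Adj u v := G₁.Adj u.1 v.1 ∧ G₂.Adj u.2 v.2
  symm := ⟨fun _ _ h => ⟨h.1.symm, h.2.symm⟩⟩
  loopless := ⟨fun u h => G₁.irrefl h.1⟩

/-- `s` is an independent set of the graph `G`. -/
def IndepSet {V : Type*} (G : SimpleGraph V) (s : Set V) : Prop :=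
  ∀ a ∈ s, ∀ b ∈ s, ¬ G.Adj a b

/-!
Split an independent set `S` of `G₁ × G₂` into fibres `S_x ⊆ V₂` over `x ∈ V₁`, and pick in each
fibre a maximal `G₂`-independent subset `I_x`. The points `(x, v)` with `v ∈ I_x` number at most
`|V₁| α(G₂)`. For the others, maximality gives `w ∈ I_x` adjacent to `v`; so if `x, x'` are adjacent
and both have `v` in their fibre outside `I`, then `(x, w)` and `(x', v)` are adjacent points of `S`.
Hence for fixed `v` these `x` form a `G₁`-independent set, and there are at most `|V₂| α(G₁)` such
points. Thus `α(G₁ × G₂) ≤ N₁ N₂^(1-ε) + N₂ N₁^(1-ε)`, and when `N₁^c ≤ N₂ ≤ N₁^(1/c)` and both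
are large, each term is at most `(N₁ N₂)^(1-δ) / 2` as soon as `δ (1/c + 1) ≤ ε / 2`.
-/

lemma IndepSet.insert {V : Type*} {G : SimpleGraph V} {s : Set V} {v : V} (hs : IndepSet G s)
    (hv : ∀ w ∈ s, ¬ G.Adj v w) : IndepSet G (insert v s) := by
  rintro a (rfl | ha) b (rfl | hb) hab
  · exact G.irrefl hab
  · exact hv b hb hab
  · exact hv a ha hab.symm
  · exact hs a ha b hb hab

lemma exists_indepSet_subset_dominating {V : Type*} (G : SimpleGraph V) (F : Finset V) :
    ∃ I ⊆ F, IndepSet G ↑I ∧ ∀ v ∈ F, v ∉ I → ∃ w ∈ I, G.Adj v w := by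
  classical
  obtain ⟨I, -, hImax⟩ := (F.powerset.filter fun J : Finset V => IndepSet G ↑J).exists_le_maximal
    (a := ∅) (by simp [IndepSet])
  obtain ⟨hIF, hI⟩ := mem_filter.1 hImax.prop
  refine ⟨I, mem_powerset.1 hIF, hI, fun v hvF hvI => ?_⟩
  by_contra! hv
  have hins : insert v I ∈ F.powerset.filter fun J : Finset V => IndepSet G ↑J := by
    refine mem_filter.2 ⟨mem_powerset.2 (insert_subset hvF (mem_powerset.1 hIF)), ?_⟩
    rw [coe_insert]
    exact hI.insert hv
  exact hvI (hImax.2 hins (subset_insert v I) (mem_insert_self v I))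

lemma card_le_card_mul_of_card_fiber_le {α β : Type*} [Fintype β] [DecidableEq β]
    (s : Finset α) (f : α → β) {m : ℝ} (h : ∀ b, (#{a ∈ s | f a = b} : ℝ) ≤ m) :
    (#s : ℝ) ≤ Fintype.card β * m := by
  rw [card_eq_sum_card_fiberwise (t := univ) fun a _ => mem_univ (f a), Nat.cast_sum,
    ← card_univ, ← nsmul_eq_mul, ← sum_const]
  exact sum_le_sum fun b _ => h b

theorem ncard_le_of_indepSet_graphProd {V₁ V₂ : Type*} [Fintype V₁] [Fintype V₂]
    {G₁ : SimpleGraph V₁} {G₂ : SimpleGraph V₂} {m₁ m₂ : ℝ}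
    (h₁ : ∀ t : Set V₁, IndepSet G₁ t → (t.ncard : ℝ) ≤ m₁)
    (h₂ : ∀ t : Set V₂, IndepSet G₂ t → (t.ncard : ℝ) ≤ m₂)
    {s : Set (V₁ × V₂)} (hs : IndepSet (graphProd G₁ G₂) s) :
    (s.ncard : ℝ) ≤ Fintype.card V₁ * m₂ + Fintype.card V₂ * m₁ := by
  classical
  choose I hIF hI hIdom using fun x =>
    exists_indepSet_subset_dominating G₂ (univ.filter fun v => (x, v) ∈ s)
  set S := s.toFinset
  set R := S.filter fun p => p.2 ∈ I p.1
  set T := S.filter fun p => p.2 ∉ I p.1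
  have hR : ∀ x, (#{p ∈ R | p.1 = x} : ℝ) ≤ m₂ := fun x => by
    have hcard : #{p ∈ R | p.1 = x} ≤ #(I x) := by
      refine card_le_card_of_injOn Prod.snd (fun p hp => ?_) fun p hp q hq hpq => ?_
      · simp only [R, mem_coe, mem_filter] at hp
        exact hp.2 ▸ hp.1.2
      · simp only [R, mem_coe, mem_filter] at hp hq
        exact Prod.ext (hp.2.trans hq.2.symm) hpq
    refine le_trans (Nat.cast_le.2 hcard) ?_
    simpa using h₂ _ (hI x)
  have hT : ∀ v, (#{p ∈ T | p.2 = v} : ℝ) ≤ m₁ := fun v => by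
    have hinj : Set.InjOn Prod.fst (↑{p ∈ T | p.2 = v} : Set (V₁ × V₂)) := fun p hp q hq hpq => by
      simp only [T, mem_coe, mem_filter] at hp hq
      exact Prod.ext hpq (hp.2.trans hq.2.symm)
    have hind : IndepSet G₁ ↑({p ∈ T | p.2 = v}.image Prod.fst) := by
      intro a ha b hb hab
      simp only [T, S, mem_coe, mem_image, mem_filter, Set.mem_toFinset] at ha hb
      obtain ⟨p, ⟨⟨hpS, hpI⟩, hpv⟩, rfl⟩ := ha
      obtain ⟨q, ⟨⟨hqS, -⟩, hqv⟩, rfl⟩ := hb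
      obtain ⟨w, hwI, hpw⟩ := hIdom p.1 p.2 (by simpa using hpS) hpI
      exact hs (p.1, w) (by simpa using hIF p.1 hwI) q hqS ⟨hab, hqv ▸ hpv ▸ hpw.symm⟩
    rw [← card_image_of_injOn hinj]
    simpa only [Set.ncard_coe_finset] using h₁ _ hind
  calc (s.ncard : ℝ) = #R + #T := by
        rw [Set.ncard_eq_toFinset_card', ← Nat.cast_add, card_filter_add_card_filter_not]
    _ ≤ Fintype.card V₁ * m₂ + Fintype.card V₂ * m₁ :=
        add_le_add (card_le_card_mul_of_card_fiber_le R Prod.fst hR)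
          (card_le_card_mul_of_card_fiber_le T Prod.snd hT)

lemma mul_rpow_one_sub_le_half {A B ε c δ : ℝ} (hA : 0 ≤ A) (hB : 2 ^ (2 / ε) ≤ B)
    (hAB : A ^ c ≤ B) (hε : 0 < ε) (hc : 0 < c) (hδ : 0 ≤ δ) (hδε : δ / c + δ ≤ ε / 2) :
    A * B ^ (1 - ε) ≤ (A * B) ^ (1 - δ) / 2 := by
  have hB1 : 1 ≤ B := (Real.one_le_rpow one_le_two (by positivity)).trans hB
  have hB0 : 0 < B := one_pos.trans_le hB1
  have hAδ : A ^ δ ≤ B ^ (δ / c) := calc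
    A ^ δ = (A ^ c) ^ (δ / c) := by rw [← Real.rpow_mul hA, mul_div_cancel₀ _ hc.ne']
    _ ≤ B ^ (δ / c) := Real.rpow_le_rpow (Real.rpow_nonneg hA c) hAB (by positivity)
  have hBhalf : B ^ (-(ε / 2)) ≤ 1 / 2 := by
    have h2 : 2 ≤ B ^ (ε / 2) := calc
      (2 : ℝ) = (2 ^ (2 / ε)) ^ (ε / 2) := by
        rw [← Real.rpow_mul zero_le_two, div_mul_div_comm, mul_comm 2 ε, div_self (by positivity),
          Real.rpow_one]
      _ ≤ B ^ (ε / 2) := Real.rpow_le_rpow (by positivity) hB (by positivity)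
    rw [Real.rpow_neg hB0.le, one_div]
    exact inv_anti₀ two_pos h2
  have hsmall : A ^ δ * B ^ (δ - ε) ≤ 1 / 2 := calc
    A ^ δ * B ^ (δ - ε) ≤ B ^ (δ / c) * B ^ (δ - ε) := by gcongr
    _ = B ^ (δ / c + (δ - ε)) := (Real.rpow_add hB0 _ _).symm
    _ ≤ B ^ (-(ε / 2)) := Real.rpow_le_rpow_of_exponent_le hB1 (by linarith)
    _ ≤ 1 / 2 := hBhalf
  calc A * B ^ (1 - ε) = (A * B) ^ (1 - δ) * (A ^ δ * B ^ (δ - ε)) := by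
        rw [Real.mul_rpow hA hB0.le, mul_mul_mul_comm, ← Real.rpow_add' hA (by norm_num),
          ← Real.rpow_add hB0]
        norm_num
    _ ≤ (A * B) ^ (1 - δ) * (1 / 2) := by gcongr
    _ = (A * B) ^ (1 - δ) / 2 := by ring

lemma mul_rpow_add_mul_rpow_le {A B ε c δ : ℝ} (hA : 2 ^ (2 / ε) ≤ A) (hB : 2 ^ (2 / ε) ≤ B)
    (hAB : A ^ c ≤ B) (hBA : B ≤ A ^ (1 / c)) (hε : 0 < ε) (hc : 0 < c) (hδ : 0 ≤ δ)
    (hδε : δ / c + δ ≤ ε / 2) :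
    A * B ^ (1 - ε) + B * A ^ (1 - ε) ≤ (A * B) ^ (1 - δ) := by
  have hA0 : 0 ≤ A := (Real.rpow_nonneg zero_le_two _).trans hA
  have hB0 : 0 ≤ B := (Real.rpow_nonneg zero_le_two _).trans hB
  have hBA' : B ^ c ≤ A := by
    rwa [one_div, Real.le_rpow_inv_iff_of_pos hB0 hA0 hc] at hBA
  have h₁ := mul_rpow_one_sub_le_half hA0 hB hAB hε hc hδ hδε
  have h₂ := mul_rpow_one_sub_le_half hB0 hA hBA' hε hc hδ hδε
  rw [mul_comm B A] at h₂
  linarith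

/-- **Independence number of a product of two graphs.** -/
theorem independence_number_of_product (ε c : ℝ)
    (hε : ε ∈ Set.Ioo (0:ℝ) 1) (hc : c ∈ Set.Ioo (0:ℝ) 1) :
    ∃ δ₀ > (0:ℝ), ∀ δ ∈ Set.Ioc (0:ℝ) δ₀,
    ∃ N₀ : ℕ, ∀ N : ℕ, N₀ ≤ N →
    ∀ (N₁ N₂ : ℕ) (V₁ V₂ : Type) [Fintype V₁] [Fintype V₂],
      Fintype.card V₁ = N₁ → Fintype.card V₂ = N₂ →
      (N : ℝ) ≤ (N₁ : ℝ) ^ c → (N₁ : ℝ) ^ c ≤ (N₂ : ℝ) → (N₂ : ℝ) ≤ (N₁ : ℝ) ^ (1 / c) →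
    ∀ (G₁ : SimpleGraph V₁) (G₂ : SimpleGraph V₂),
      (∀ s : Set V₁, IndepSet G₁ s → (s.ncard : ℝ) ≤ (N₁ : ℝ) ^ ((1:ℝ) - ε)) →
      (∀ s : Set V₂, IndepSet G₂ s → (s.ncard : ℝ) ≤ (N₂ : ℝ) ^ ((1:ℝ) - ε)) →
    ∀ s : Set (V₁ × V₂), IndepSet (graphProd G₁ G₂) s →
      (s.ncard : ℝ) ≤ ((N₁ : ℝ) * (N₂ : ℝ)) ^ ((1:ℝ) - δ) := by
  obtain ⟨hε, -⟩ := hε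
  obtain ⟨hc, hc1⟩ := hc
  refine ⟨ε * c / (2 * (c + 1)), by positivity, fun δ ⟨hδ, hδ₀⟩ => ⟨⌈(2 : ℝ) ^ (2 / ε)⌉₊, ?_⟩⟩
  intro N hN N₁ N₂ V₁ V₂ _ _ hV₁ hV₂ hNN₁ hN₁N₂ hN₂N₁ G₁ G₂ h₁ h₂ s hs
  have hδε : δ / c + δ ≤ ε / 2 := by
    rw [le_div_iff₀ (by positivity)] at hδ₀
    rw [div_add' _ _ _ hc.ne', div_le_iff₀ hc]
    linarith
  have hN : (2 : ℝ) ^ (2 / ε) ≤ N := Nat.ceil_le.1 hN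
  have hN₁ : 1 ≤ (N₁ : ℝ) := by
    rcases N₁.eq_zero_or_pos with rfl | hpos
    · rw [Nat.cast_zero, Real.zero_rpow hc.ne'] at hNN₁
      linarith [Real.rpow_pos_of_pos two_pos (2 / ε)]
    · exact_mod_cast hpos
  calc (s.ncard : ℝ) ≤ N₁ * N₂ ^ (1 - ε) + N₂ * N₁ ^ (1 - ε) := by
        simpa only [hV₁, hV₂] using ncard_le_of_indepSet_graphProd h₁ h₂ hs
    _ ≤ (N₁ * N₂) ^ (1 - δ) :=
        mul_rpow_add_mul_rpow_le (hN.trans (hNN₁.trans (Real.rpow_le_self_of_one_le hN₁ hc1.le)))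
          (hN.trans (hNN₁.trans hN₁N₂)) hN₁N₂ hN₂N₁ hε hc hδ.le hδε
end
end
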